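/- arXiv:1411.4684 — 6 statements merged into one kernel-verified Lean document; each statement's English description precedes it below -/
import Mathlib

section
/- With N_n as above, the limit lim_{n→∞} (log_2 N_n)/n exists and equals (1/(2 log 2)) · Σ_{j=1}^∞ (log F_j)/2^j, where F_0 = 1, F_1 = 2, F_{j+2} = F_{j+1} + F_j. -/
/-!
The constraint `x_k x_{2k} = 0` only couples positions on a common chain `m, 2m, 4m, …` with
`m` odd, so an admissible word is an independent choice, on every chain, of a binary word with
no two adjacent ones; on a chain of length `ℓ` there are `F_ℓ = fib (ℓ + 2)` of them. The chain
of `m` has length `j` exactly when `n / 2^j < m ≤ n / 2^(j-1)`; the number `c_{n,j}` of such odd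
`m` is `n / 2^(j+1) + O(1)`. Hence `log N_n / n = ∑_j (c_{n,j} / n) log F_j` with
`c_{n,j} / n → 2^-(j+1)`, and the bounds `c_{n,j} ≤ n / 2^(j-1)`, `log F_j ≤ j log 2` let
dominated convergence for series pass to the limit termwise.
-/

open Filter Finset Topology

section NoAdjacentOnes

def NoAdjacentOnes {L : ℕ} (y : Fin L → Fin 2) : Prop :=
  ∀ i : ℕ, ∀ h : i + 1 < L, ¬(y ⟨i, by omega⟩ = 1 ∧ y ⟨i + 1, h⟩ = 1)

lemma noAdjacentOnes_of_le_one {L : ℕ} (hL : L ≤ 1) (y : Fin L → Fin 2) : NoAdjacentOnes y :=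
  fun _ h => absurd h (by omega)

lemma noAdjacentOnes_cons {L : ℕ} {b : Fin 2} {z : Fin L → Fin 2} :
    NoAdjacentOnes (Fin.cons b z : Fin (L + 1) → Fin 2) ↔
      (∀ h : 0 < L, ¬(b = 1 ∧ z ⟨0, h⟩ = 1)) ∧ NoAdjacentOnes z := by
  constructor
  · intro hy
    exact ⟨fun h => hy 0 (Nat.succ_lt_succ h), fun i h => hy (i + 1) (Nat.succ_lt_succ h)⟩
  · rintro ⟨h0, hz⟩ (_ | i) h
    · exact h0 (by omega)
    · exact hz i (by omega)

lemma noAdjacentOnes_cons_zero {L : ℕ} {z : Fin L → Fin 2} :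
    NoAdjacentOnes (Fin.cons 0 z : Fin (L + 1) → Fin 2) ↔ NoAdjacentOnes z := by
  simp [noAdjacentOnes_cons]

lemma noAdjacentOnes_cons_one {L : ℕ} {z : Fin (L + 1) → Fin 2} :
    NoAdjacentOnes (Fin.cons 1 z : Fin (L + 2) → Fin 2) ↔ z 0 = 0 ∧ NoAdjacentOnes z := by
  simp only [noAdjacentOnes_cons, true_and, Fin.zero_eta, Nat.succ_pos, forall_true_left]
  exact and_congr_left' (by generalize z 0 = a; revert a; decide)

lemma Nat.card_subtype_fin_cons {α : Type*} [Fintype α] {L : ℕ} (P : (Fin (L + 1) → α) → Prop) :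
    Nat.card {y // P y} = ∑ a : α, Nat.card {z : Fin L → α // P (Fin.cons a z)} := by
  rw [← Nat.card_sigma]
  exact Nat.card_congr ((Equiv.subtypeEquiv (Fin.consEquiv fun _ => α) fun _ => Iff.rfl).symm.trans
    (Equiv.subtypeProdEquivSigmaSubtype fun a z => P (Fin.cons a z)))

theorem card_noAdjacentOnes (L : ℕ) :
    Nat.card {y : Fin L → Fin 2 // NoAdjacentOnes y} = Nat.fib (L + 2) := by
  induction L using Nat.twoStepInduction with
  | zero => simp [noAdjacentOnes_of_le_one]
  | one => simp [noAdjacentOnes_of_le_one, Nat.fib_add_two]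
  | more L ih₀ ih₁ =>
    have h : Nat.card {z : Fin (L + 1) → Fin 2 // z 0 = 0 ∧ NoAdjacentOnes z} =
        Nat.card {w : Fin L → Fin 2 // NoAdjacentOnes w} := by
      simp [Nat.card_subtype_fin_cons (L := L), noAdjacentOnes_cons_zero]
    rw [Nat.card_subtype_fin_cons, Fin.sum_univ_two]
    simp only [noAdjacentOnes_cons_zero, noAdjacentOnes_cons_one, h, ih₀, ih₁,
      Nat.fib_add_two (n := L + 2)]
    ring

end NoAdjacentOnes

section Chains

def oddUpTo (n : ℕ) : Finset ℕ := {m ∈ range (n + 1) | Odd m}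

lemma mem_oddUpTo {n m : ℕ} : m ∈ oddUpTo n ↔ m ≤ n ∧ Odd m := by
  simp [oddUpTo]

def chainLength (n m : ℕ) : ℕ := Nat.size (n / m)

lemma lt_chainLength_iff {n m i : ℕ} (hm : 0 < m) : i < chainLength n m ↔ 2 ^ i * m ≤ n := by
  rw [chainLength, Nat.lt_size, Nat.le_div_iff_mul_le hm]

lemma two_pow_mul_odd_inj {i j m k : ℕ} (hm : Odd m) (hk : Odd k) (h : 2 ^ i * m = 2 ^ j * k) :
    i = j ∧ m = k := by
  have hmk : m = k := by
    rw [← Nat.ordCompl_pow_mul_of_not_dvd i Nat.prime_two hm.not_two_dvd_nat, h,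
      Nat.ordCompl_pow_mul_of_not_dvd j Nat.prime_two hk.not_two_dvd_nat]
  subst hmk
  exact ⟨Nat.pow_right_injective le_rfl (Nat.eq_of_mul_eq_mul_right hm.pos h), rfl⟩

/-- Positions are `0`-based: the paper's `x_k` is entry `k - 1`. -/
def chainPosition (n : ℕ) (p : Σ m : oddUpTo n, Fin (chainLength n m)) : Fin n :=
  ⟨2 ^ (p.2 : ℕ) * p.1 - 1, by
    have hm := mem_oddUpTo.1 p.1.2
    have := (lt_chainLength_iff hm.2.pos).1 p.2.2
    have := hm.2.pos
    have := Nat.le_mul_of_pos_left (p.1 : ℕ) (by positivity : 0 < 2 ^ (p.2 : ℕ))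
    omega⟩

lemma chainPosition_bijective (n : ℕ) : Function.Bijective (chainPosition n) := by
  constructor
  · rintro ⟨⟨m, hm⟩, ⟨i, hi⟩⟩ ⟨⟨k, hk⟩, ⟨j, hj⟩⟩ h
    have hm' := mem_oddUpTo.1 hm
    have hk' := mem_oddUpTo.1 hk
    have := Nat.le_mul_of_pos_left m (by positivity : 0 < 2 ^ i)
    have := Nat.le_mul_of_pos_left k (by positivity : 0 < 2 ^ j)
    have := hm'.2.pos
    have := hk'.2.pos
    have h' : 2 ^ i * m - 1 = 2 ^ j * k - 1 := congrArg Fin.val h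
    obtain ⟨rfl, rfl⟩ := two_pow_mul_odd_inj (i := i) (j := j) hm'.2 hk'.2 (by omega)
    rfl
  · rintro ⟨k, hk⟩
    obtain ⟨i, m, hm, hkm⟩ := Nat.exists_eq_two_pow_mul_odd (n := k + 1) (by omega)
    have hmk : m ≤ k + 1 := hkm ▸ Nat.le_mul_of_pos_left m (by positivity)
    refine ⟨⟨⟨m, mem_oddUpTo.2 ⟨by omega, hm⟩⟩, ⟨i, (lt_chainLength_iff hm.pos).2 (by omega)⟩⟩, ?_⟩
    simp [chainPosition, ← hkm]

noncomputable def chainEquiv (n : ℕ) : (Σ m : oddUpTo n, Fin (chainLength n m)) ≃ Fin n :=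
  .ofBijective _ (chainPosition_bijective n)

noncomputable def restrictToChains (n : ℕ) :
    (Fin n → Fin 2) ≃ ∀ m : oddUpTo n, Fin (chainLength n m) → Fin 2 :=
  ((chainEquiv n).arrowCongr (.refl _)).symm.trans (.piCurry fun _ _ => Fin 2)

lemma restrictToChains_apply_eq {n : ℕ} (x : Fin n → Fin 2) (m : oddUpTo n)
    (i : Fin (chainLength n m)) (k : Fin n) (hk : (k : ℕ) = 2 ^ (i : ℕ) * m - 1) :
    restrictToChains n x m i = x k :=
  congrArg x (Fin.ext hk.symm)

def DoublingFree {n : ℕ} (x : Fin n → Fin 2) : Prop :=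
  ∀ k : ℕ, ∀ _h1 : 1 ≤ k, ∀ _h2 : 2 * k ≤ n,
    ¬(x ⟨k - 1, by omega⟩ = 1 ∧ x ⟨2 * k - 1, by omega⟩ = 1)

lemma doublingFree_iff {n : ℕ} (x : Fin n → Fin 2) :
    DoublingFree x ↔ ∀ m, NoAdjacentOnes (restrictToChains n x m) := by
  constructor
  · rintro hx ⟨m, hm⟩ i hi
    have hm0 := (mem_oddUpTo.1 hm).2.pos
    have h2 := (lt_chainLength_iff hm0).1 hi
    rw [pow_succ, mul_comm _ 2, mul_assoc] at h2
    convert hx (2 ^ i * m) ((Nat.le_mul_of_pos_left m (by positivity)).trans' hm0) h2 using 4 <;>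
      exact restrictToChains_apply_eq _ _ _ _ (by ring_nf)
  · intro hx k hk1 hk2
    obtain ⟨i, m, hm, rfl⟩ := Nat.exists_eq_two_pow_mul_odd (n := k) (by omega)
    have hm' : m ∈ oddUpTo n :=
      mem_oddUpTo.2 ⟨(Nat.le_mul_of_pos_left m (by positivity : 0 < 2 ^ i)).trans (by omega), hm⟩
    have hi : i + 1 < chainLength n m := (lt_chainLength_iff hm.pos).2 (by rw [pow_succ]; linarith)
    convert hx ⟨m, hm'⟩ i hi using 4 <;>
      exact (restrictToChains_apply_eq _ _ _ _ (by ring_nf)).symm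

theorem card_doublingFree (n : ℕ) :
    Nat.card {x : Fin n → Fin 2 // DoublingFree x} =
      ∏ m ∈ oddUpTo n, Nat.fib (chainLength n m + 2) := by
  rw [Nat.card_congr ((Equiv.subtypeEquiv (restrictToChains n) doublingFree_iff).trans
    Equiv.subtypePiEquivPi), Nat.card_pi]
  simp only [card_noAdjacentOnes]
  exact prod_coe_sort (oddUpTo n) fun m => Nat.fib (chainLength n m + 2)

end Chains

section Counting

lemma card_oddUpTo (x : ℕ) : #(oddUpTo x) = (x + 1) / 2 := by
  induction x with
  | zero => rfl
  | succ x ih =>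
    rw [oddUpTo, range_add_one, filter_insert, ← oddUpTo]
    split_ifs with h
    · rw [card_insert_of_notMem (by simp [oddUpTo]), ih]
      rw [Nat.odd_iff] at h
      omega
    · rw [ih]
      rw [Nat.not_odd_iff] at h
      omega

lemma filter_two_pow_mul_le_oddUpTo (n i : ℕ) :
    {m ∈ oddUpTo n | 2 ^ i * m ≤ n} = oddUpTo (n / 2 ^ i) := by
  ext m
  simp only [oddUpTo, mem_filter, mem_range, Nat.lt_succ_iff]
  rw [Nat.le_div_iff_mul_le (by positivity), mul_comm m]
  constructor
  · rintro ⟨⟨-, hm⟩, h⟩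
    exact ⟨h, hm⟩
  · rintro ⟨h, hm⟩
    exact ⟨⟨le_trans (Nat.le_mul_of_pos_left m (by positivity)) h, hm⟩, h⟩

lemma card_filter_two_pow_mul_le (n i : ℕ) :
    #{m ∈ oddUpTo n | 2 ^ i * m ≤ n} = (n + 2 ^ i) / 2 ^ (i + 1) := by
  rw [filter_two_pow_mul_le_oddUpTo, card_oddUpTo, pow_succ, ← Nat.div_div_eq_div_mul,
    Nat.add_div_right _ (by positivity)]

lemma card_filter_two_pow_mul_le_mul (n i : ℕ) :
    #{m ∈ oddUpTo n | 2 ^ i * m ≤ n} * 2 ^ i ≤ n := by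
  rw [filter_two_pow_mul_le_oddUpTo, ← Nat.le_div_iff_mul_le (by positivity), card_oddUpTo]
  generalize n / 2 ^ i = x
  omega

lemma filter_chainLength_eq_succ (n j : ℕ) :
    {m ∈ oddUpTo n | chainLength n m = j + 1} =
      {m ∈ oddUpTo n | 2 ^ j * m ≤ n} \ {m ∈ oddUpTo n | 2 ^ (j + 1) * m ≤ n} := by
  ext m
  simp only [Finset.mem_sdiff, mem_filter]
  by_cases hm : m ∈ oddUpTo n
  · have hm0 : 0 < m := (mem_oddUpTo.1 hm).2.pos
    rw [← lt_chainLength_iff hm0, ← lt_chainLength_iff hm0]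
    simp only [hm, true_and]
    omega
  · simp [hm]

lemma cast_card_chainLength_eq_succ (n j : ℕ) :
    (#{m ∈ oddUpTo n | chainLength n m = j + 1} : ℝ) =
      #{m ∈ oddUpTo n | 2 ^ j * m ≤ n} - #{m ∈ oddUpTo n | 2 ^ (j + 1) * m ≤ n} := by
  rw [filter_chainLength_eq_succ, cast_card_sdiff]
  intro m
  simp only [mem_filter, and_imp]
  exact fun hm h => ⟨hm, le_trans (by gcongr <;> omega) h⟩

end Counting

section Limits

lemma tendsto_div_of_abs_sub_mul_le {u : ℕ → ℝ} {c C : ℝ} (h : ∀ n, |u n - c * n| ≤ C) :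
    Tendsto (fun n => u n / n) atTop (𝓝 c) := by
  rw [tendsto_iff_norm_sub_tendsto_zero]
  refine squeeze_zero' (.of_forall fun _ => norm_nonneg _) ?_
    (tendsto_const_div_atTop_nhds_zero_nat C)
  filter_upwards [eventually_gt_atTop 0] with n hn
  have hn' : (0 : ℝ) < n := by exact_mod_cast hn
  rw [show u n / n - c = (u n - c * n) / n by field_simp, norm_div, Real.norm_natCast]
  exact div_le_div_of_nonneg_right (h n) hn'.le

lemma tendsto_natCast_add_div_div (a b : ℕ) (hb : 0 < b) :
    Tendsto (fun n : ℕ => (((n + a) / b : ℕ) : ℝ) / n) atTop (𝓝 (1 / b)) := by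
  refine tendsto_div_of_abs_sub_mul_le (C := a / b + 1) fun n => ?_
  have hb' : (0 : ℝ) < b := by exact_mod_cast hb
  rw [← Nat.floor_div_eq_div (K := ℝ)]
  have h1 := Nat.floor_le (a := ((n + a : ℕ) : ℝ) / b) (by positivity)
  have h2 := Nat.lt_floor_add_one (((n + a : ℕ) : ℝ) / b)
  have : ((n + a : ℕ) : ℝ) / b = 1 / b * n + a / b := by push_cast; ring
  have : (0 : ℝ) ≤ a / b := by positivity
  rw [abs_le]
  constructor <;> linarith

lemma Finset.sum_comp_eq_tsum {ι κ M : Type*} [AddCommMonoid M] [TopologicalSpace M]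
    [DecidableEq κ] (s : Finset ι) (f : κ → M) (g : ι → κ) :
    ∑ a ∈ s, f (g a) = ∑' b, #{a ∈ s | g a = b} • f b := by
  rw [sum_comp, tsum_eq_sum]
  intro b hb
  rw [card_eq_zero.2 (filter_eq_empty_iff.2 fun a ha (hab : g a = b) =>
    hb (hab ▸ mem_image_of_mem g ha)), zero_smul]

lemma Nat.fib_add_two_le_two_pow (j : ℕ) : Nat.fib (j + 2) ≤ 2 ^ j := by
  induction j with
  | zero => simp
  | succ j ih =>
    have h₁ : Nat.fib (j + 1 + 2) = Nat.fib (j + 1) + Nat.fib (j + 2) := Nat.fib_add_two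
    have h₂ : Nat.fib (j + 1) ≤ Nat.fib (j + 2) := Nat.fib_le_fib_succ
    rw [pow_succ]
    omega

lemma log_fib_add_two_le (j : ℕ) : Real.log (Nat.fib (j + 2)) ≤ j * Real.log 2 := by
  rw [← Real.log_pow]
  exact Real.log_le_log (by simp) (by exact_mod_cast Nat.fib_add_two_le_two_pow j)

lemma tendsto_card_chainLength_eq_succ_div (j : ℕ) :
    Tendsto (fun n : ℕ => (#{m ∈ oddUpTo n | chainLength n m = j + 1} : ℝ) / n) atTop
      (𝓝 (1 / 2 ^ (j + 2))) := by
  simp_rw [cast_card_chainLength_eq_succ, card_filter_two_pow_mul_le]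
  convert (tendsto_natCast_add_div_div (2 ^ j) (2 ^ (j + 1)) (by positivity)).sub
    (tendsto_natCast_add_div_div (2 ^ (j + 1)) (2 ^ (j + 1 + 1)) (by positivity)) using 2
  · ring
  · push_cast
    ring

lemma card_chainLength_eq_succ_le (n j : ℕ) :
    (#{m ∈ oddUpTo n | chainLength n m = j + 1} : ℝ) ≤ n / 2 ^ j := by
  rw [le_div_iff₀ (by positivity)]
  exact_mod_cast (Nat.mul_le_mul_right _ (card_le_card
    (filter_chainLength_eq_succ n j ▸ sdiff_subset))).trans (card_filter_two_pow_mul_le_mul n j)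

theorem tendsto_log_prod_fib_chainLength_div :
    Tendsto (fun n : ℕ => Real.log (∏ m ∈ oddUpTo n, Nat.fib (chainLength n m + 2) : ℕ) / n)
      atTop (𝓝 (∑' j : ℕ, Real.log (Nat.fib (j + 2)) / 2 ^ (j + 1))) := by
  have hsum (n : ℕ) : Real.log (∏ m ∈ oddUpTo n, Nat.fib (chainLength n m + 2) : ℕ) / n =
      ∑' j, (#{m ∈ oddUpTo n | chainLength n m = j} : ℝ) / n * Real.log (Nat.fib (j + 2)) := by
    rw [Nat.cast_prod, Real.log_prod fun m _ => by simp,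
      sum_comp_eq_tsum _ (fun j => Real.log (Nat.fib (j + 2))), ← tsum_div_const]
    simp only [nsmul_eq_mul, div_mul_eq_mul_div]
  simp_rw [hsum]
  refine tendsto_tsum_of_dominated_convergence
    (bound := fun j => 2 * Real.log 2 * (j * (1 / 2) ^ j)) ?_ ?_ ?_
  · simpa using (summable_pow_mul_geometric_of_norm_lt_one 1 (r := (1 / 2 : ℝ))
      (by norm_num)).mul_left (2 * Real.log 2)
  · rintro (_ | j)
    · simp
    convert (tendsto_card_chainLength_eq_succ_div j).mul_const _ using 2
    ring
  · filter_upwards [eventually_gt_atTop 0] with n hn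
    rintro (_ | j)
    · simp
    have hlog0 : 0 ≤ Real.log (Nat.fib (j + 1 + 2)) := Real.log_natCast_nonneg _
    rw [Real.norm_eq_abs, abs_of_nonneg (by positivity)]
    calc (#{m ∈ oddUpTo n | chainLength n m = j + 1} : ℝ) / n * Real.log (Nat.fib (j + 1 + 2))
        ≤ n / 2 ^ j / n * ((j + 1 : ℕ) * Real.log 2) := by
          gcongr
          exacts [card_chainLength_eq_succ_le n j, log_fib_add_two_le (j + 1)]
      _ = 2 * Real.log 2 * ((j + 1 : ℕ) * (1 / 2) ^ (j + 1)) := by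
        have hn' : (n : ℝ) ≠ 0 := by positivity
        rw [one_div_pow]
        field_simp
        ring

end Limits

lemma eq_fib_add_two_of_rec {F : ℕ → ℕ} (hF0 : F 0 = 1) (hF1 : F 1 = 2)
    (hFrec : ∀ j, F (j + 2) = F (j + 1) + F j) : F = fun j => Nat.fib (j + 2) := by
  funext j
  induction j using Nat.twoStepInduction with
  | zero => simp [hF0]
  | one => simp [hF1, Nat.fib_add_two]
  | more j ih₀ ih₁ => rw [hFrec, ih₀, ih₁, Nat.fib_add_two (n := j + 2), add_comm]

/-- With `N_n` the number of words `(x_1,…,x_n) ∈ {0,1}^n` such that `x_k x_{2k} = 0`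
whenever `2k ≤ n`, the limit `lim (log₂ N_n)/n` exists and equals
`(1/(2 log 2)) ∑_{j=1}^∞ (log F_j)/2^j`, where `F_0 = 1`, `F_1 = 2`,
`F_{j+2} = F_{j+1} + F_j`. -/
theorem stmt_4 (F : ℕ → ℕ) (hF0 : F 0 = 1) (hF1 : F 1 = 2)
    (hFrec : ∀ j, F (j + 2) = F (j + 1) + F j)
    (N : ℕ → ℕ)
    (hN : ∀ n : ℕ, N n = Nat.card {x : Fin n → Fin 2 //
        ∀ k : ℕ, ∀ _h1 : 1 ≤ k, ∀ _h2 : 2 * k ≤ n,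
          ¬(x ⟨k - 1, by omega⟩ = 1 ∧ x ⟨2 * k - 1, by omega⟩ = 1)}) :
    Tendsto (fun n : ℕ => Real.logb 2 (N n) / n) atTop
      (nhds (1 / (2 * Real.log 2) * ∑' j : ℕ, Real.log (F (j + 1)) / 2 ^ (j + 1))) := by
  obtain rfl := eq_fib_add_two_of_rec hF0 hF1 hFrec
  have hN' (n : ℕ) : N n = ∏ m ∈ oddUpTo n, Nat.fib (chainLength n m + 2) :=
    (hN n).trans (card_doublingFree n)
  have hshift : ∑' j : ℕ, Real.log (Nat.fib (j + 2)) / 2 ^ (j + 1) =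
      ∑' j : ℕ, Real.log (Nat.fib (j + 1 + 2)) / 2 ^ (j + 1 + 1) := by
    refine (Nat.succ_injective.tsum_eq fun j hj => ?_).symm
    cases j with
    | zero => simp at hj
    | succ j => exact ⟨j, rfl⟩
  convert tendsto_log_prod_fib_chainLength_div.div_const (Real.log 2) using 2
  · simp only [hN', Real.logb, div_right_comm]
  · rw [hshift, ← tsum_mul_left, ← tsum_div_const]
    congr 1
    funext j
    ring
end

section
/- Let ε_1, ε_2, ... be i.i.d. random variables taking values ±α each with probability 1/2, where 0 < α < 2π, and let L_n = |Σ_{k=1}^n e^{i(ε_1 + ... + ε_k)}|. Then E[L_n^2] = n(1 + cos α)/(1 − cos α) − 2 cos α (1 − cos^n α)/(1 − cos α)^2. -/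
open MeasureTheory ProbabilityTheory Finset

/-!
Expanding the square gives `L_n² = ∑_{j,k ≤ n} cos (S_j - S_k)` with `S_k = ε_1 + ⋯ + ε_k`.
For `k ≤ j` the difference `S_j - S_k` is a sum of `j - k` independent variables whose
characteristic function at `1` is `cos α`, so `E[cos (S_j - S_k)] = cos^|j - k| α`, and the
resulting double sum of powers is evaluated by induction on `n`.
-/

lemma norm_sum_exp_I_mul_sq {ι : Type*} (s : Finset ι) (x : ι → ℝ) :
    ‖∑ k ∈ s, Complex.exp (Complex.I * x k)‖ ^ 2 = ∑ j ∈ s, ∑ k ∈ s, Real.cos (x j - x k) := by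
  have hterm : ∀ j k, Complex.exp (Complex.I * x j) *
      starRingEnd ℂ (Complex.exp (Complex.I * x k)) =
        Complex.exp ((x j - x k : ℝ) * Complex.I) := by
    intro j k
    rw [← Complex.exp_conj, ← Complex.exp_add]
    congr 1
    simp only [map_mul, Complex.conj_I, Complex.conj_ofReal, Complex.ofReal_sub]
    ring
  rw [Complex.sq_norm, ← Complex.ofReal_re (Complex.normSq _), ← Complex.mul_conj, map_sum,
    sum_mul_sum, Complex.re_sum]
  simp_rw [Complex.re_sum, hterm, Complex.exp_ofReal_mul_I_re]

lemma charFun_half_dirac_add_half_dirac_neg (a t : ℝ) :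
    charFun ((2 : ENNReal)⁻¹ • Measure.dirac a + (2 : ENNReal)⁻¹ • Measure.dirac (-a)) t =
      Real.cos (a * t) := by
  have hint : ∀ b : ℝ, Integrable (fun x : ℝ ↦ Complex.exp (t * x * Complex.I))
      ((2 : ENNReal)⁻¹ • Measure.dirac b) := fun b ↦
    (integrable_dirac (by simp)).smul_measure (by simp)
  rw [charFun_apply_real, integral_add_measure (hint a) (hint (-a)), integral_smul_measure,
    integral_smul_measure, integral_dirac, integral_dirac, Complex.ofReal_cos, Complex.cos]
  simp only [ENNReal.toReal_inv, ENNReal.toReal_ofNat, Complex.real_smul, Complex.ofReal_mul,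
    Complex.ofReal_neg]
  push_cast
  ring_nf

lemma re_charFun_map {Ω : Type*} [MeasurableSpace Ω] {μ : Measure Ω} [IsFiniteMeasure μ]
    {X : Ω → ℝ} (hX : AEMeasurable X μ) (t : ℝ) :
    (charFun (μ.map X) t).re = ∫ ω, Real.cos (t * X ω) ∂μ := by
  rw [charFun_apply_real, integral_map hX (by fun_prop)]
  have : Integrable (fun ω ↦ Complex.exp (t * X ω * Complex.I)) μ :=
    Integrable.of_bound (by fun_prop) 1 (ae_of_all _ fun ω ↦ by
      simp [← Complex.ofReal_mul, Complex.norm_exp_ofReal_mul_I])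
  rw [← Complex.reCLM_apply, ← ContinuousLinearMap.integral_comp_comm _ this]
  simp [← Complex.ofReal_mul, Complex.exp_ofReal_mul_I_re]

lemma sum_Icc_one_sub_sum_Icc_one {M : Type*} [AddCommGroup M] (f : ℕ → M) {j k : ℕ}
    (hkj : k ≤ j) : ∑ i ∈ Icc 1 j, f i - ∑ i ∈ Icc 1 k, f i = ∑ i ∈ Ioc k j, f i := by
  have hIcc : ∀ m, Icc 1 m = Ioc 0 m := Icc_add_one_left_eq_Ioc 0
  rw [hIcc, hIcc, ← sum_Ioc_consecutive f k.zero_le hkj, add_sub_cancel_left]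

namespace ProbabilityTheory

variable {Ω : Type*} [MeasurableSpace Ω] {μ : Measure Ω} {c : ℝ}

lemma iIndepFun.integral_cos_finsetSum {ι : Type*} {ε : ι → Ω → ℝ} (hε : iIndepFun ε μ)
    (hmeas : ∀ i, AEMeasurable (ε i) μ) (hc : ∀ i, charFun (μ.map (ε i)) 1 = c) (s : Finset ι) :
    ∫ ω, Real.cos (∑ i ∈ s, ε i ω) ∂μ = c ^ #s := by
  have := hε.isProbabilityMeasure
  have hsum : AEMeasurable (fun ω ↦ ∑ i ∈ s, ε i ω) μ := by fun_prop
  have hre := re_charFun_map hsum 1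
  simp only [one_mul] at hre
  rw [← hre, (hε.restrict s).charFun_map_fun_finsetSum_eq_prod fun i _ ↦ hmeas i]
  simp [hc, ← Complex.ofReal_pow]

lemma iIndepFun.integral_cos_sum_Icc_sub_sum_Icc {ε : ℕ → Ω → ℝ} (hε : iIndepFun ε μ)
    (hmeas : ∀ i, AEMeasurable (ε i) μ) (hc : ∀ i, charFun (μ.map (ε i)) 1 = c) (j k : ℕ) :
    ∫ ω, Real.cos (∑ i ∈ Icc 1 j, ε i ω - ∑ i ∈ Icc 1 k, ε i ω) ∂μ = c ^ Nat.dist j k := by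
  wlog hkj : k ≤ j generalizing j k
  · simp_rw [← Real.cos_neg (_ - _), neg_sub, Nat.dist_comm j k]
    exact this k j (by omega)
  simp_rw [sum_Icc_one_sub_sum_Icc_one _ hkj]
  rw [hε.integral_cos_finsetSum hmeas hc, Nat.card_Ioc, Nat.dist_comm, Nat.dist_eq_sub_of_le hkj]

end ProbabilityTheory

lemma one_sub_mul_sum_Icc_pow_dist_succ (c : ℝ) (n : ℕ) :
    (1 - c) * ∑ k ∈ Icc 1 n, c ^ Nat.dist (n + 1) k = c * (1 - c ^ n) := by
  induction n with
  | zero => simp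
  | succ n ih =>
    have hshift : ∀ k ∈ Icc 1 n, c ^ Nat.dist (n + 1 + 1) k = c * c ^ Nat.dist (n + 1) k := by
      intro k hk
      rw [mem_Icc] at hk
      rw [← pow_succ', Nat.dist_eq_sub_of_le_right (by omega),
        Nat.dist_eq_sub_of_le_right (by omega)]
      congr 1
      omega
    rw [sum_Icc_succ_top (by omega), sum_congr rfl hshift, ← mul_sum,
      Nat.dist_eq_sub_of_le_right (by omega), Nat.add_sub_cancel_left, pow_one]
    linear_combination c * ih

lemma sum_Icc_sum_Icc_pow_dist {c : ℝ} (hc : c ≠ 1) (n : ℕ) :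
    ∑ j ∈ Icc 1 n, ∑ k ∈ Icc 1 n, c ^ Nat.dist j k =
      n * (1 + c) / (1 - c) - 2 * c * (1 - c ^ n) / (1 - c) ^ 2 := by
  have hc' : 1 - c ≠ 0 := sub_ne_zero.2 hc.symm
  induction n with
  | zero => simp
  | succ n ih =>
    have hcol := one_sub_mul_sum_Icc_pow_dist_succ c n
    simp_rw [sum_Icc_succ_top (Nat.le_add_left 1 n), sum_add_distrib, ih, Nat.dist_comm _ (n + 1)]
    rw [Nat.dist_self, pow_zero]
    field_simp
    push_cast
    linear_combination (2 * (1 - c)) * hcol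

/-- Feller's computation: if `ε_1, ε_2, …` are i.i.d. random variables taking the values
`±α` each with probability `1/2`, where `0 < α < 2π`, and
`L_n = |∑_{k=1}^n e^{i(ε_1 + ⋯ + ε_k)}|`, then
`E[L_n²] = n (1+cos α)/(1−cos α) − 2 cos α (1 − cosⁿ α)/(1−cos α)²`. -/
theorem stmt_5 {Ω : Type*} [MeasurableSpace Ω] (μ : Measure Ω) [IsProbabilityMeasure μ]
    (α : ℝ) (hα : 0 < α) (hα2 : α < 2 * Real.pi)
    (ε : ℕ → Ω → ℝ) (hmeas : ∀ k, Measurable (ε k))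
    (hindep : iIndepFun ε μ)
    (hdist : ∀ k, Measure.map (ε k) μ =
      (2 : ENNReal)⁻¹ • Measure.dirac α + (2 : ENNReal)⁻¹ • Measure.dirac (-α))
    (n : ℕ) :
    ∫ ω, (‖∑ k ∈ Icc 1 n,
        Complex.exp (Complex.I * ((∑ j ∈ Icc 1 k, ε j ω : ℝ) : ℂ))‖) ^ 2 ∂μ =
      n * (1 + Real.cos α) / (1 - Real.cos α) -
        2 * Real.cos α * (1 - (Real.cos α) ^ n) / (1 - Real.cos α) ^ 2 := by
  have hcos : Real.cos α ≠ 1 := fun h ↦ hα.ne' <|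
    (Real.cos_eq_one_iff_of_lt_of_lt (by linarith [Real.pi_pos]) hα2).1 h
  have hchar : ∀ k, charFun (μ.map (ε k)) 1 = Real.cos α := fun k ↦ by
    rw [hdist, charFun_half_dirac_add_half_dirac_neg, mul_one]
  have hint : ∀ j k, Integrable
      (fun ω ↦ Real.cos (∑ i ∈ Icc 1 j, ε i ω - ∑ i ∈ Icc 1 k, ε i ω)) μ := fun j k ↦
    Integrable.of_bound (by fun_prop) 1 (ae_of_all _ fun ω ↦ by
      simpa using Real.abs_cos_le_one _)
  simp_rw [norm_sum_exp_I_mul_sq]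
  rw [integral_finsetSum _ fun j _ ↦ integrable_finsetSum _ fun k _ ↦ hint j k]
  simp_rw [integral_finsetSum _ fun k _ ↦ hint _ k,
    hindep.integral_cos_sum_Icc_sub_sum_Icc (fun i ↦ (hmeas i).aemeasurable) hchar]
  exact sum_Icc_sum_Icc_pow_dist hcos n
end

section
/- The lower Hausdorff dimension of a Borel probability measure μ equals the μ-essential infimum of the lower local dimension: dim_* μ = ess inf_μ liminf_{r→0} log μ(B(x,r))/log r. -/
open MeasureTheory Filter
open scoped ENNReal Topology

variable {X : Type*} [MetricSpace X] [CompleteSpace X] [SecondCountableTopology X]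
  [MeasurableSpace X] [BorelSpace X]

/-- The lower Hausdorff dimension of a measure:
`dim_* μ = inf {dim_H A : A Borel, μ(A) > 0}`. -/
noncomputable def lowerDim (μ : Measure X) : ℝ≥0∞ :=
  ⨅ (A : Set X) (_ : MeasurableSet A) (_ : 0 < μ A), dimH A

/-- The lower local dimension of `μ` at `x`:
`liminf_{r→0⁺} log μ(B(x,r)) / log r` (as an extended nonnegative real). -/
noncomputable def lowerLocalDim (μ : Measure X) (x : X) : ℝ≥0∞ :=
  liminf (fun r : ℝ =>
    ENNReal.ofReal (Real.log (μ (Metric.closedBall x r)).toReal / Real.log r)) (𝓝[>] 0)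

/-!
Where the lower local dimension exceeds `c`, `μ(B(x, r)) ≤ r ^ c` for all small `r`; on a set of
positive measure where this holds uniformly, the mass distribution principle gives positive
`c`-dimensional Hausdorff measure, so `essInf ≤ dim_* μ`. Where the lower local dimension is below
`d`, `μ(B(x, r)) ≥ r ^ d` for arbitrarily small `r`, and Vitali's covering lemma bounds the
`d`-dimensional Hausdorff measure of such points by a multiple of `μ(X)`; their measurable hulls
have positive measure and dimension arbitrarily close to `d`, so `dim_* μ ≤ essInf`.
-/

open Set Metric
open scoped NNReal

lemma Real.lt_log_div_log_iff {r m c : ℝ} (hr₀ : 0 < r) (hr₁ : r < 1) (hm : 0 < m) :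
    c < Real.log m / Real.log r ↔ m < r ^ c := by
  rw [lt_div_iff_of_neg (Real.log_neg hr₀ hr₁), ← Real.log_rpow hr₀,
    Real.log_lt_log_iff hm (by positivity)]

/-- At `t = ∞` both sides are false: `ENNReal.toReal ∞ = 0` and `Real.log 0 = 0`. -/
lemma ENNReal.coe_lt_ofReal_log_div_log_iff {r : ℝ} {t : ℝ≥0∞} {c : ℝ≥0} (hr₀ : 0 < r)
    (hr₁ : r < 1) (ht : t ≠ 0) :
    (c : ℝ≥0∞) < ENNReal.ofReal (Real.log t.toReal / Real.log r) ↔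
      t < ENNReal.ofReal r ^ (c : ℝ) := by
  rcases eq_or_ne t ∞ with rfl | ht'
  · simp
  rw [ENNReal.lt_ofReal_iff_toReal_lt ENNReal.coe_ne_top, ENNReal.coe_toReal,
    Real.lt_log_div_log_iff hr₀ hr₁ (ENNReal.toReal_pos ht ht'),
    ENNReal.ofReal_rpow_of_nonneg hr₀.le c.coe_nonneg, ENNReal.lt_ofReal_iff_toReal_lt ht']

lemma Set.PairwiseDisjoint.countable_of_measure_pos {α ι : Type*} [MeasurableSpace α]
    {μ : Measure α} [SFinite μ] {u : Set ι} {s : ι → Set α} (hd : u.PairwiseDisjoint s)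
    (hs : ∀ i ∈ u, NullMeasurableSet (s i) μ) (hpos : ∀ i ∈ u, 0 < μ (s i)) : u.Countable := by
  have hcount := Measure.countable_meas_pos_of_disjoint_iUnion₀ (μ := μ)
    (As := fun i : u => s i) (fun i => hs i i.2)
    (fun i j hij => (hd i.2 j.2 (Subtype.coe_ne_coe.2 hij)).aedisjoint)
  rw [show {i : u | 0 < μ (s i)} = univ from eq_univ_of_forall fun i => hpos i i.2,
    countable_univ_iff] at hcount
  exact countable_coe_iff.1 hcount

section MetricMeasure

variable {α : Type*} [MetricSpace α]

lemma ediam_closedBall_four_mul_le (x : α) {r : ℝ} (hr : 0 ≤ r) :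
    ediam (closedBall x (4 * r)) ≤ 8 * ENNReal.ofReal r := by
  rw [← closedEBall_ofReal (by positivity)]
  refine ediam_closedEBall_le.trans_eq ?_
  rw [ENNReal.ofReal_mul (by norm_num), ← mul_assoc]
  norm_num

variable [MeasurableSpace α]

lemma eventually_measure_closedBall_le_of_lt_lowerLocalDim {μ : Measure α} {x : α} {c : ℝ≥0}
    (h : (c : ℝ≥0∞) < lowerLocalDim μ x) :
    ∀ᶠ r in 𝓝[>] 0, μ (closedBall x r) ≤ ENNReal.ofReal r ^ (c : ℝ) := by
  filter_upwards [eventually_lt_of_lt_liminf h, Ioo_mem_nhdsGT one_pos] with r hr ⟨hr₀, hr₁⟩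
  rcases eq_or_ne (μ (closedBall x r)) 0 with h0 | h0
  · simp [h0]
  · exact ((ENNReal.coe_lt_ofReal_log_div_log_iff hr₀ hr₁ h0).1 hr).le

lemma frequently_le_measure_closedBall_of_lowerLocalDim_lt {μ : Measure α} {x : α} {d : ℝ≥0}
    (hx : x ∈ μ.support) (h : lowerLocalDim μ x < d) :
    ∃ᶠ r in 𝓝[>] 0, ENNReal.ofReal r ^ (d : ℝ) ≤ μ (closedBall x r) := by
  refine ((frequently_lt_of_liminf_lt (by isBoundedDefault) h).and_eventually
    (Ioo_mem_nhdsGT one_pos)).mono ?_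
  rintro r ⟨hr, hr₀, hr₁⟩
  have hpos : μ (closedBall x r) ≠ 0 :=
    ((μ.mem_support_iff_forall x).1 hx _ (closedBall_mem_nhds x hr₀)).ne'
  exact not_lt.1 fun hlt => hr.not_gt ((ENNReal.coe_lt_ofReal_log_div_log_iff hr₀ hr₁ hpos).2 hlt)

lemma measure_inter_le_ediam_rpow_of_forall_measure_closedBall_le (μ : Measure α)
    {s t : Set α} {c δ : ℝ} (hδ : 0 < δ)
    (h : ∀ x ∈ s, ∀ r ∈ Ioc 0 δ, μ (closedBall x r) ≤ ENNReal.ofReal r ^ c)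
    (ht : ediam t ≤ ENNReal.ofReal (δ / 2)) :
    μ (t ∩ s) ≤ ediam t ^ c := by
  rcases (t ∩ s).eq_empty_or_nonempty with hts | ⟨x, hxt, hxs⟩
  · simp [hts]
  have hfin : ediam t ≠ ∞ := ne_top_of_le_ne_top ENNReal.ofReal_ne_top ht
  have hdiam : diam t < δ := by
    have := ENNReal.toReal_mono ENNReal.ofReal_ne_top ht
    rw [ENNReal.toReal_ofReal (by positivity)] at this
    exact this.trans_lt (half_lt_self hδ)
  have hbound : ∀ ρ ∈ Ioo (diam t) δ, μ (t ∩ s) ≤ ENNReal.ofReal ρ ^ c := fun ρ hρ =>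
    calc μ (t ∩ s) ≤ μ (closedBall x ρ) := measure_mono fun y hy =>
          mem_closedBall.2 ((dist_le_diam_of_mem' hfin hy.1 hxt).trans hρ.1.le)
      _ ≤ ENNReal.ofReal ρ ^ c := h x hxs ρ ⟨diam_nonneg.trans_lt hρ.1, hρ.2.le⟩
  have hlim : Tendsto (fun ρ => ENNReal.ofReal ρ ^ c) (𝓝[>] (diam t)) (𝓝 (ediam t ^ c)) := by
    rw [← ENNReal.ofReal_toReal hfin]
    exact ((ENNReal.continuous_rpow_const.comp ENNReal.continuous_ofReal).tendsto _).mono_left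
      nhdsWithin_le_nhds
  exact ge_of_tendsto hlim (eventually_of_mem (Ioo_mem_nhdsGT hdiam) hbound)

variable [BorelSpace α]

/-- The mass distribution principle. -/
lemma measure_le_hausdorffMeasure_of_forall_measure_closedBall_le (μ : Measure α)
    {s : Set α} {c δ : ℝ} (hδ : 0 < δ)
    (h : ∀ x ∈ s, ∀ r ∈ Ioc 0 δ, μ (closedBall x r) ≤ ENNReal.ofReal r ^ c) :
    μ s ≤ μH[c] s :=
  calc μ s = OuterMeasure.restrict s μ.toOuterMeasure s := by
        rw [OuterMeasure.restrict_apply, inter_self, Measure.coe_toOuterMeasure]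
    _ ≤ OuterMeasure.mkMetric (fun r => r ^ c) s :=
        OuterMeasure.le_mkMetric _ _ _ (ENNReal.ofReal_pos.2 (half_pos hδ)) (fun t ht => by
          rw [OuterMeasure.restrict_apply, Measure.coe_toOuterMeasure]
          exact measure_inter_le_ediam_rpow_of_forall_measure_closedBall_le μ hδ h ht) s
    _ = μH[c] s := by rw [Measure.hausdorffMeasure, OuterMeasure.coe_mkMetric]

lemma tsum_ediam_closedBall_rpow_le (μ : Measure α) (d : ℝ≥0) {u : Set (α × ℝ)}
    (hd : u.PairwiseDisjoint fun p => closedBall p.1 p.2)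
    (hu : ∀ p ∈ u, 0 ≤ p.2 ∧ ENNReal.ofReal p.2 ^ (d : ℝ) ≤ μ (closedBall p.1 p.2)) :
    ∑' p : u, ediam (closedBall p.1.1 (4 * p.1.2)) ^ (d : ℝ) ≤ 8 ^ (d : ℝ) * μ univ :=
  calc ∑' p : u, ediam (closedBall p.1.1 (4 * p.1.2)) ^ (d : ℝ)
      ≤ ∑' p : u, 8 ^ (d : ℝ) * μ (closedBall p.1.1 p.1.2) := by
        refine ENNReal.tsum_le_tsum fun p => ?_
        calc ediam (closedBall p.1.1 (4 * p.1.2)) ^ (d : ℝ)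
            ≤ (8 * ENNReal.ofReal p.1.2) ^ (d : ℝ) :=
              ENNReal.rpow_le_rpow (ediam_closedBall_four_mul_le _ (hu p p.2).1) d.coe_nonneg
          _ ≤ 8 ^ (d : ℝ) * μ (closedBall p.1.1 p.1.2) := by
              rw [ENNReal.mul_rpow_of_nonneg _ _ d.coe_nonneg]
              exact mul_le_mul_right (hu p p.2).2 _
    _ = 8 ^ (d : ℝ) * ∑' p : u, μ (closedBall p.1.1 p.1.2) := ENNReal.tsum_mul_left
    _ ≤ 8 ^ (d : ℝ) * μ (⋃ p : u, closedBall p.1.1 p.1.2) := by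
        gcongr
        exact tsum_meas_le_meas_iUnion_of_disjoint μ (fun _ => measurableSet_closedBall)
          fun p q hpq => hd p.2 q.2 (Subtype.coe_ne_coe.2 hpq)
    _ ≤ 8 ^ (d : ℝ) * μ univ := by gcongr; exact subset_univ _

/-- At each scale `δ`, Vitali's lemma picks disjoint balls `B(x, r)`, `r ≤ δ`, with
`r ^ d ≤ μ(B(x, r))` whose fourfold enlargements cover the set. -/
lemma hausdorffMeasure_setOf_frequently_le_measure_closedBall_le (μ : Measure α) [SFinite μ]
    (d : ℝ≥0) :
    μH[d] {x | ∃ᶠ r in 𝓝[>] 0, ENNReal.ofReal r ^ (d : ℝ) ≤ μ (closedBall x r)} ≤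
      8 ^ (d : ℝ) * μ univ := by
  set S := {x | ∃ᶠ r in 𝓝[>] 0, ENNReal.ofReal r ^ (d : ℝ) ≤ μ (closedBall x r)}
  set t : ℝ → Set (α × ℝ) := fun δ =>
    {p | p.1 ∈ S ∧ p.2 ∈ Ioc 0 δ ∧ ENNReal.ofReal p.2 ^ (d : ℝ) ≤ μ (closedBall p.1 p.2)}
  choose u hut hdisj hcover using fun δ =>
    Vitali.exists_disjoint_subfamily_covering_enlargement_closedBall (t δ) Prod.fst Prod.snd δ
      (fun p hp => hp.2.1.2) 4 (by norm_num)
  have hu : ∀ δ, ∀ p ∈ u δ, 0 ≤ p.2 ∧ ENNReal.ofReal p.2 ^ (d : ℝ) ≤ μ (closedBall p.1 p.2) :=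
    fun δ p hp => ⟨(hut δ hp).2.1.1.le, (hut δ hp).2.2⟩
  have : ∀ δ, Countable (u δ) := fun δ => countable_coe_iff.2 <|
    (hdisj δ).countable_of_measure_pos (fun _ _ => measurableSet_closedBall.nullMeasurableSet)
      fun p hp => (ENNReal.rpow_pos (ENNReal.ofReal_pos.2 (hut δ hp).2.1.1)
        ENNReal.ofReal_ne_top).trans_le (hut δ hp).2.2
  have hSu : ∀ δ > 0, S ⊆ ⋃ p : u δ, closedBall p.1.1 (4 * p.1.2) := fun δ hδ x hx => by
    obtain ⟨r, hr, hrδ⟩ := (hx.and_eventually (Ioo_mem_nhdsGT hδ)).exists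
    obtain ⟨p, hp, hsub⟩ := hcover δ (x, r) ⟨hx, Ioo_subset_Ioc_self hrδ, hr⟩
    exact mem_iUnion.2 ⟨⟨p, hp⟩, hsub (mem_closedBall_self hrδ.1.le)⟩
  have hdiam : ∀ δ, ∀ p : u δ, ediam (closedBall p.1.1 (4 * p.1.2)) ≤ 8 * ENNReal.ofReal δ :=
    fun δ p => (ediam_closedBall_four_mul_le _ (hu δ p p.2).1).trans <|
      by gcongr; exact (hut δ p.2).2.1.2
  have hlim : Tendsto (fun δ : ℝ => 8 * ENNReal.ofReal δ) (𝓝[>] 0) (𝓝 0) := by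
    simpa using ENNReal.Tendsto.const_mul ((ENNReal.continuous_ofReal.tendsto 0).mono_left
      nhdsWithin_le_nhds) (Or.inr ENNReal.ofNat_ne_top)
  calc μH[d] S
      ≤ liminf (fun δ => ∑' p : u δ, ediam (closedBall p.1.1 (4 * p.1.2)) ^ (d : ℝ)) (𝓝[>] 0) :=
        Measure.hausdorffMeasure_le_liminf_tsum _ S _ hlim _ (Eventually.of_forall hdiam)
          (eventually_mem_nhdsWithin.mono hSu)
    _ ≤ 8 ^ (d : ℝ) * μ univ := liminf_le_of_frequently_le' <|
        Frequently.of_forall fun δ => tsum_ediam_closedBall_rpow_le μ d (hdisj δ) (hu δ)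

lemma le_dimH_of_ae_eventually_measure_closedBall_le {μ : Measure α} {s : Set α} {c : ℝ≥0}
    (h : ∀ᵐ x ∂μ, ∀ᶠ r in 𝓝[>] 0, μ (closedBall x r) ≤ ENNReal.ofReal r ^ (c : ℝ))
    (hs : μ s ≠ 0) : (c : ℝ≥0∞) ≤ dimH s := by
  set s' : ℕ → Set α := fun n =>
    {x ∈ s | ∀ r ∈ Ioc 0 (1 / ((n : ℝ) + 1)), μ (closedBall x r) ≤ ENNReal.ofReal r ^ (c : ℝ)}
  have hcover : s ⊆ (⋃ n, s' n) ∪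
      {x | ¬∀ᶠ r in 𝓝[>] 0, μ (closedBall x r) ≤ ENNReal.ofReal r ^ (c : ℝ)} := by
    intro x hx
    by_cases hbound : ∀ᶠ r in 𝓝[>] 0, μ (closedBall x r) ≤ ENNReal.ofReal r ^ (c : ℝ)
    · obtain ⟨ε, hε, hεsub⟩ := mem_nhdsGT_iff_exists_Ioc_subset.1 hbound
      obtain ⟨n, hn⟩ := exists_nat_one_div_lt (mem_Ioi.1 hε)
      exact Or.inl (mem_iUnion.2 ⟨n, hx, fun r hr => hεsub ⟨hr.1, hr.2.trans hn.le⟩⟩)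
    · exact Or.inr hbound
  obtain ⟨n, hn⟩ : ∃ n, μ (s' n) ≠ 0 := by
    by_contra! h0
    exact hs (measure_mono_null hcover (measure_union_null (measure_iUnion_null h0) h))
  have hH : μH[c] (s' n) ≠ 0 := fun h0 => hn <| le_antisymm
    ((measure_le_hausdorffMeasure_of_forall_measure_closedBall_le μ Nat.one_div_pos_of_nat
      fun x hx => hx.2).trans h0.le) bot_le
  exact (le_dimH_of_hausdorffMeasure_ne_zero hH).trans (dimH_mono (sep_subset _ _))

/-- `s` need not be measurable: for `dimH s < d` it has a measurable hull that is null for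
`μH[d]`. -/
lemma lowerDim_le_dimH {μ : Measure α} {s : Set α} (hs : μ s ≠ 0) : lowerDim μ ≤ dimH s := by
  refine le_of_forall_gt_imp_ge_of_dense fun e he => ?_
  obtain ⟨d, hsd, hde⟩ := ENNReal.lt_iff_exists_nnreal_btwn.1 he
  obtain ⟨t, hst, ht, htd⟩ := exists_measurable_superset_of_null (hausdorffMeasure_of_dimH_lt hsd)
  calc lowerDim μ ≤ dimH t :=
        iInf₂_le_of_le t ht (iInf_le _ ((pos_iff_ne_zero.2 hs).trans_le (measure_mono hst)))
    _ ≤ d := dimH_le_of_hausdorffMeasure_ne_top (by simp [htd])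
    _ ≤ e := hde.le

end MetricMeasure

/-- `dim_* μ` equals the `μ`-essential infimum of the lower local dimension. -/
theorem stmt_9 (μ : Measure X) [IsProbabilityMeasure μ] :
    lowerDim μ = essInf (lowerLocalDim μ) μ := by
  refine le_antisymm (le_of_forall_gt_imp_ge_of_dense fun e he => ?_)
    (le_iInf₂ fun A _ => le_iInf fun hA => ENNReal.le_of_forall_nnreal_lt fun c hc => ?_)
  · obtain ⟨d, hd, hde⟩ := ENNReal.lt_iff_exists_nnreal_btwn.1 he
    -- Off the support, `μ (closedBall x r) = 0` and the junk value `Real.log 0 = 0` make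
    -- `lowerLocalDim μ x = 0`, so these points must be discarded.
    have hpos : μ ({x | lowerLocalDim μ x < d} ∩ μ.support) ≠ 0 := by
      rw [measure_inter_conull μ.measure_compl_support]
      refine fun h0 => hd.not_ge (le_essInf_of_ae_le _ (ae_iff.2 ?_))
      simpa only [not_le] using h0
    calc lowerDim μ ≤ dimH ({x | lowerLocalDim μ x < d} ∩ μ.support) := lowerDim_le_dimH hpos
      _ ≤ dimH {x | ∃ᶠ r in 𝓝[>] 0, ENNReal.ofReal r ^ (d : ℝ) ≤ μ (closedBall x r)} :=
          dimH_mono fun x hx => frequently_le_measure_closedBall_of_lowerLocalDim_lt hx.2 hx.1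
      _ ≤ d := dimH_le_of_hausdorffMeasure_ne_top <| ne_top_of_le_ne_top (by finiteness)
          (hausdorffMeasure_setOf_frequently_le_measure_closedBall_le μ d)
      _ ≤ e := hde.le
  · exact le_dimH_of_ae_eventually_measure_closedBall_le
      ((ae_lt_of_lt_essInf hc).mono fun x => eventually_measure_closedBall_le_of_lt_lowerLocalDim)
      hA.ne'
end

section
/- The upper Hausdorff dimension of a Borel probability measure μ equals the μ-essential supremum of the lower local dimension: dim^* μ = ess sup_μ liminf_{r→0} log μ(B(x,r))/log r. -/
/-!
If `D̲_μ < s` on a set `A`, every `x ∈ A` carries arbitrarily small balls with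
`μ(B(x, r)) > r^s`; a Vitali subfamily of disjoint such balls, enlarged fourfold, covers `A` with
`∑ diam^s ≤ 8^s`, so `dim_H A ≤ s`. On the conull set of points of the support where
`D̲_μ ≤ ess sup D̲_μ` this gives `dim^* μ ≤ ess sup D̲_μ`.

Conversely, if `s < ess sup D̲_μ`, then on a set of positive measure `μ(B(x, r)) ≤ r^s` for all
`r < 1/(n+1)`, with `n` fixed. By the mass distribution principle every conull `A` has
`H^s(A) > 0`, hence `dim_H A ≥ s`.
-/

open MeasureTheory Filter Metric Set
open scoped ENNReal NNReal Topology

lemma log_div_log_lt_iff {r m s : ℝ} (hr₀ : 0 < r) (hr₁ : r < 1) (hm : 0 < m) :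
    Real.log m / Real.log r < s ↔ r ^ s < m := by
  rw [div_lt_iff_of_neg (Real.log_neg hr₀ hr₁), ← Real.log_rpow hr₀,
    Real.log_lt_log_iff (Real.rpow_pos_of_pos hr₀ s) hm]

/-- `m ≤ 1` keeps the ratio nonnegative, so that `ENNReal.ofReal` does not truncate it. -/
lemma ofReal_log_div_log_lt_iff {r : ℝ} {m : ℝ≥0∞} {s : ℝ≥0} (hr₀ : 0 < r) (hr₁ : r < 1)
    (hm₀ : m ≠ 0) (hm₁ : m ≤ 1) :
    ENNReal.ofReal (Real.log m.toReal / Real.log r) < s ↔ ENNReal.ofReal r ^ (s : ℝ) < m := by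
  have hm : m ≠ ∞ := ne_top_of_le_ne_top ENNReal.one_ne_top hm₁
  have hlog : 0 ≤ Real.log m.toReal / Real.log r :=
    div_nonneg_of_nonpos (Real.log_nonpos ENNReal.toReal_nonneg (ENNReal.toReal_le_of_le_ofReal
      zero_le_one (by simpa using hm₁))) (Real.log_neg hr₀ hr₁).le
  rw [ENNReal.ofReal_lt_coe_iff hlog, log_div_log_lt_iff hr₀ hr₁ (ENNReal.toReal_pos hm₀ hm),
    ENNReal.ofReal_rpow_of_nonneg hr₀.le s.coe_nonneg,
    ENNReal.ofReal_lt_iff_lt_toReal (by positivity) hm]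

/- Stated for an arbitrary `m`: `lowerLocalDim μ x` is the `liminf` below for
`m r = μ (closedBall x r)`. -/
section LowerExponent

variable {m : ℝ → ℝ≥0∞} {s : ℝ≥0}

lemma frequently_rpow_lt_of_liminf_lt (hm₀ : ∀ r, 0 < r → m r ≠ 0) (hm₁ : ∀ r, m r ≤ 1)
    (h : liminf (fun r => ENNReal.ofReal (Real.log (m r).toReal / Real.log r)) (𝓝[>] 0) < s) :
    ∃ᶠ r in 𝓝[>] 0, ENNReal.ofReal r ^ (s : ℝ) < m r := by
  refine (frequently_lt_of_liminf_lt (by isBoundedDefault) h).mp ?_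
  filter_upwards [Ioo_mem_nhdsGT one_pos] with r ⟨hr₀, hr₁⟩
  exact (ofReal_log_div_log_lt_iff hr₀ hr₁ (hm₀ r hr₀) (hm₁ r)).1

lemma eventually_le_rpow_of_lt_liminf (hm₁ : ∀ r, m r ≤ 1)
    (h : s < liminf (fun r => ENNReal.ofReal (Real.log (m r).toReal / Real.log r)) (𝓝[>] 0)) :
    ∀ᶠ r in 𝓝[>] 0, m r ≤ ENNReal.ofReal r ^ (s : ℝ) := by
  filter_upwards [eventually_lt_of_lt_liminf h, Ioo_mem_nhdsGT one_pos] with r hr ⟨hr₀, hr₁⟩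
  rcases eq_or_ne (m r) 0 with h0 | h0
  · simp [h0]
  · exact not_lt.1 fun hlt => hr.not_gt ((ofReal_log_div_log_lt_iff hr₀ hr₁ h0 (hm₁ r)).2 hlt)

end LowerExponent

lemma le_ofReal_rpow_of_forall_Ioo {a : ℝ≥0∞} {r δ : ℝ} {s : ℝ} (hrδ : r < δ)
    (h : ∀ r' ∈ Ioo r δ, a ≤ ENNReal.ofReal r' ^ s) : a ≤ ENNReal.ofReal r ^ s :=
  ge_of_tendsto ((ENNReal.continuous_rpow_const.comp ENNReal.continuous_ofReal).tendsto r
    |>.mono_left nhdsWithin_le_nhds) (eventually_of_mem (Ioo_mem_nhdsGT hrδ) h)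

section MetricMeasure

variable {X : Type*} [MetricSpace X] [MeasurableSpace X] {μ : Measure X}

lemma isClosed_setOf_forall_measure_closedBall_le (μ : Measure X) (s δ : ℝ) :
    IsClosed {x | ∀ r ∈ Ioo 0 δ, μ (closedBall x r) ≤ ENNReal.ofReal r ^ s} := by
  refine isClosed_of_closure_subset fun x hx r ⟨hr₀, hrδ⟩ => ?_
  refine le_ofReal_rpow_of_forall_Ioo hrδ fun r' ⟨hrr', hr'δ⟩ => ?_
  obtain ⟨y, hy, hxy⟩ := Metric.mem_closure_iff.1 hx (r' - r) (by linarith)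
  calc μ (closedBall x r) ≤ μ (closedBall y r') :=
        measure_mono (closedBall_subset_closedBall' (by linarith))
    _ ≤ ENNReal.ofReal r' ^ s := hy r' ⟨hr₀.trans hrr', hr'δ⟩

theorem measure_le_hausdorffMeasure_of_measure_closedBall_le [BorelSpace X] {F : Set X}
    (hF : MeasurableSet F) {s δ : ℝ} (hδ : 0 < δ)
    (h : ∀ x ∈ F, ∀ r ∈ Ioo 0 δ, μ (closedBall x r) ≤ ENNReal.ofReal r ^ s) :
    μ F ≤ μH[s] F := by
  suffices μ.restrict F ≤ μH[s] by simpa [hF] using this F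
  refine Measure.le_hausdorffMeasure _ _ (ENNReal.ofReal (δ / 2)) (by simpa using hδ)
    fun t ht => ?_
  rw [Measure.restrict_apply' hF]
  rcases (t ∩ F).eq_empty_or_nonempty with h₀ | ⟨x, hxt, hxF⟩
  · simp [h₀]
  have htop : ediam t ≠ ∞ := ne_top_of_le_ne_top ENNReal.ofReal_ne_top ht
  have hd : (ediam t).toReal < δ := by
    have := ENNReal.toReal_mono ENNReal.ofReal_ne_top ht
    rw [ENNReal.toReal_ofReal (by positivity)] at this
    linarith
  rw [← ENNReal.ofReal_toReal htop]
  refine le_ofReal_rpow_of_forall_Ioo hd fun r ⟨hdr, hrδ⟩ => ?_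
  have hsub : t ∩ F ⊆ closedBall x r := fun y hy => by
    rw [mem_closedBall, dist_edist]
    exact (ENNReal.toReal_mono htop (edist_le_ediam_of_mem hy.1 hxt)).trans hdr.le
  exact (measure_mono hsub).trans (h x hxF r ⟨ENNReal.toReal_nonneg.trans_lt hdr, hrδ⟩)

lemma exists_countable_disjoint_closedBall_covering [OpensMeasurableSpace X] [IsFiniteMeasure μ]
    {A : Set X} {s : ℝ} (hA : ∀ x ∈ A, ∃ᶠ r in 𝓝[>] 0, ENNReal.ofReal r ^ s < μ (closedBall x r))
    {δ : ℝ} (hδ : 0 < δ) :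
    ∃ u : Set (X × ℝ), u.Countable ∧ u.PairwiseDisjoint (fun p => closedBall p.1 p.2) ∧
      (∀ p ∈ u, 0 < p.2 ∧ p.2 ≤ δ ∧ ENNReal.ofReal p.2 ^ s < μ (closedBall p.1 p.2)) ∧
      A ⊆ ⋃ p ∈ u, closedBall p.1 (4 * p.2) := by
  set T : Set (X × ℝ) := {p | p.1 ∈ A ∧ 0 < p.2 ∧ p.2 ≤ δ ∧
    ENNReal.ofReal p.2 ^ s < μ (closedBall p.1 p.2)}
  obtain ⟨u, huT, hdisj, hcov⟩ := Vitali.exists_disjoint_subfamily_covering_enlargement_closedBall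
    T Prod.fst Prod.snd δ (fun p hp => hp.2.2.1) 4 (by norm_num)
  have hcount : u.Countable := by
    have := Measure.countable_meas_pos_of_disjoint_iUnion (μ := μ)
      (As := fun p : u => closedBall p.1.1 p.1.2) (fun _ => measurableSet_closedBall)
      (fun p q hpq => hdisj p.2 q.2 (Subtype.coe_ne_coe.2 hpq))
    simp only [fun p : u => pos_of_gt (huT p.2).2.2.2, ofPred_true, countable_univ_iff,
      countable_coe_iff] at this
    exact this
  refine ⟨u, hcount, hdisj, fun p hp => (huT hp).2, fun x hx => ?_⟩
  obtain ⟨r, hr, hr₀, hrδ⟩ := ((hA x hx).and_eventually (Ioc_mem_nhdsGT hδ)).exists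
  obtain ⟨p, hp, hsub⟩ := hcov (x, r) ⟨hx, hr₀, hrδ, hr⟩
  exact mem_biUnion hp (hsub (mem_closedBall_self hr₀.le))

theorem hausdorffMeasure_le_of_frequently_lt_measure_closedBall [BorelSpace X] [IsFiniteMeasure μ]
    {A : Set X} {s : ℝ} (hs : 0 ≤ s)
    (hA : ∀ x ∈ A, ∃ᶠ r in 𝓝[>] 0, ENNReal.ofReal r ^ s < μ (closedBall x r)) :
    μH[s] A ≤ 8 ^ s * μ univ := by
  have hδ (n : ℕ) : (0 : ℝ) < 1 / (n + 1) := by positivity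
  choose u hu hdisj hball hcov using fun n =>
    exists_countable_disjoint_closedBall_covering hA (hδ n)
  have hcount (n : ℕ) : Countable (u n) := (hu n).to_subtype
  have hdiam (n : ℕ) (p : u n) :
      ediam (closedBall p.1.1 (4 * p.1.2)) ≤ 8 * ENNReal.ofReal p.1.2 := by
    have h₀ := (hball n p.1 p.2).1.le
    calc ediam (closedBall p.1.1 (4 * p.1.2)) ≤ 2 * ENNReal.ofReal (4 * p.1.2) := by
          rw [← closedEBall_ofReal (by positivity)]; exact ediam_closedEBall_le
      _ = 8 * ENNReal.ofReal p.1.2 := by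
          rw [ENNReal.ofReal_mul (by norm_num), ← mul_assoc]; norm_num
  have hsum (n : ℕ) : ∑' p : u n, ediam (closedBall p.1.1 (4 * p.1.2)) ^ s ≤ 8 ^ s * μ univ :=
    calc ∑' p : u n, ediam (closedBall p.1.1 (4 * p.1.2)) ^ s
        ≤ ∑' p : u n, 8 ^ s * μ (closedBall p.1.1 p.1.2) := by
          refine ENNReal.tsum_le_tsum fun p => ?_
          calc ediam (closedBall p.1.1 (4 * p.1.2)) ^ s ≤ (8 * ENNReal.ofReal p.1.2) ^ s := by
                gcongr; exact hdiam n p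
            _ ≤ 8 ^ s * μ (closedBall p.1.1 p.1.2) := by
                rw [ENNReal.mul_rpow_of_nonneg _ _ hs]; gcongr; exact (hball n p.1 p.2).2.2.le
      _ = 8 ^ s * μ (⋃ p ∈ u n, closedBall p.1 p.2) := by
          rw [ENNReal.tsum_mul_left, measure_biUnion (hu n) (hdisj n)
            fun _ _ => measurableSet_closedBall]
      _ ≤ 8 ^ s * μ univ := by gcongr; exact subset_univ _
  have hlim : Tendsto (fun n : ℕ => 8 * ENNReal.ofReal (1 / (n + 1))) atTop (𝓝 0) := by
    simpa using ENNReal.Tendsto.const_mul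
      (ENNReal.tendsto_ofReal tendsto_one_div_add_atTop_nhds_zero_nat) (.inr ENNReal.ofNat_ne_top)
  calc μH[s] A ≤ liminf (fun n => ∑' p : u n, ediam (closedBall p.1.1 (4 * p.1.2)) ^ s) atTop :=
        Measure.hausdorffMeasure_le_liminf_tsum s A _ hlim _
          (Eventually.of_forall fun n p =>
            (hdiam n p).trans (by gcongr; exact (hball n p.1 p.2).2.1))
          (Eventually.of_forall fun n => by simpa only [biUnion_eq_iUnion] using hcov n)
    _ ≤ 8 ^ s * μ univ := liminf_le_of_frequently_le' (Frequently.of_forall hsum)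

theorem dimH_le_of_frequently_lt_measure_closedBall [BorelSpace X] [IsFiniteMeasure μ]
    {A : Set X} {s : ℝ≥0}
    (hA : ∀ x ∈ A, ∃ᶠ r in 𝓝[>] 0, ENNReal.ofReal r ^ (s : ℝ) < μ (closedBall x r)) :
    dimH A ≤ s :=
  dimH_le_of_hausdorffMeasure_ne_top <| ne_top_of_le_ne_top
    (ENNReal.mul_ne_top (ENNReal.rpow_ne_top_of_nonneg s.coe_nonneg ENNReal.ofNat_ne_top)
      (measure_ne_top _ _))
    (hausdorffMeasure_le_of_frequently_lt_measure_closedBall s.coe_nonneg hA)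

theorem le_dimH_of_frequently_ae_measure_closedBall_le [BorelSpace X] {A : Set X}
    (hA : MeasurableSet A) {s : ℝ≥0}
    (h : ∃ᵐ x ∂μ, x ∈ A ∧ ∀ᶠ r in 𝓝[>] 0, μ (closedBall x r) ≤ ENNReal.ofReal r ^ (s : ℝ)) :
    (s : ℝ≥0∞) ≤ dimH A := by
  set E : ℕ → Set X := fun n =>
    {x | ∀ r ∈ Ioo (0 : ℝ) (1 / (n + 1)), μ (closedBall x r) ≤ ENNReal.ofReal r ^ (s : ℝ)}
  have hsub : {x | x ∈ A ∧ ∀ᶠ r in 𝓝[>] 0, μ (closedBall x r) ≤ ENNReal.ofReal r ^ (s : ℝ)} ⊆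
      ⋃ n, A ∩ E n := by
    rintro x ⟨hxA, hx⟩
    obtain ⟨ε, hε, hεsub⟩ := mem_nhdsGT_iff_exists_Ioo_subset.1 hx
    obtain ⟨n, hn⟩ := exists_nat_one_div_lt (mem_Ioi.1 hε)
    exact mem_iUnion.2 ⟨n, hxA, fun r hr => hεsub ⟨hr.1, hr.2.trans hn⟩⟩
  obtain ⟨n, hn⟩ : ∃ n, μ (A ∩ E n) ≠ 0 := by
    by_contra! h₀
    exact frequently_ae_iff.1 h (measure_mono_null hsub (measure_iUnion_null h₀))
  refine le_dimH_of_hausdorffMeasure_ne_zero (ne_bot_of_le_ne_bot hn ?_)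
  calc μ (A ∩ E n) ≤ μH[s] (A ∩ E n) :=
        measure_le_hausdorffMeasure_of_measure_closedBall_le
          (hA.inter (isClosed_setOf_forall_measure_closedBall_le μ s (1 / (n + 1))).measurableSet)
          (by positivity) fun x hx => hx.2
    _ ≤ μH[s] A := measure_mono inter_subset_left

end MetricMeasure

variable {X : Type*} [MetricSpace X] [CompleteSpace X] [SecondCountableTopology X]
  [MeasurableSpace X] [BorelSpace X]

/-- The upper Hausdorff dimension of a measure:
`dim^* μ = inf {dim_H A : A Borel, μ(Aᶜ) = 0}`. -/
noncomputable def upperDim (μ : Measure X) : ℝ≥0∞ :=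
  ⨅ (A : Set X) (_ : MeasurableSet A) (_ : μ Aᶜ = 0), dimH A

/-- `dim^* μ` equals the `μ`-essential supremum of the lower local dimension. -/
theorem stmt_10 (μ : Measure X) [IsProbabilityMeasure μ] :
    upperDim μ = essSup (lowerLocalDim μ) μ := by
  have hμ₁ (x : X) (r : ℝ) : μ (closedBall x r) ≤ 1 := prob_le_one
  refine le_antisymm ?_ (le_iInf₂ fun A hA => le_iInf fun hAc => ?_)
  · have hae : ∀ᵐ x ∂μ, x ∈ μ.support ∧ lowerLocalDim μ x ≤ essSup (lowerLocalDim μ) μ :=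
      Eventually.and Measure.support_mem_ae ae_le_essSup
    obtain ⟨A, hA_ae, hA, hgood⟩ := hae.exists_measurable_mem
    refine (iInf₂_le_of_le A hA (iInf_le _ (mem_ae_iff.1 hA_ae))).trans
      (le_of_forall_gt_imp_ge_of_dense fun c hc => ?_)
    obtain rfl | hc_top := eq_or_ne c ∞
    · exact le_top
    lift c to ℝ≥0 using hc_top
    refine dimH_le_of_frequently_lt_measure_closedBall fun x hx =>
      frequently_rpow_lt_of_liminf_lt (fun r hr => ?_) (hμ₁ x) ((hgood x hx).2.trans_lt hc)
    exact ((Measure.mem_support_iff_forall x).1 (hgood x hx).1 _ (closedBall_mem_nhds x hr)).ne'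
  · refine ENNReal.le_of_forall_nnreal_lt fun s hs =>
      le_dimH_of_frequently_ae_measure_closedBall_le (μ := μ) hA ?_
    exact ((frequently_lt_of_lt_limsup (by isBoundedDefault) hs).and_eventually
      (mem_ae_iff.2 hAc)).mono fun x hx => ⟨hx.2, eventually_le_rpow_of_lt_liminf (hμ₁ x) hx.1⟩
end

section
/- The Bessel-type integral satisfies (1/2π) ∫_0^{2π} e^{r cos x} dx = Σ_{n=0}^∞ r^{2n} / ((n!)² 2^{2n}) for all real r. -/
/-!
Expand `exp (r cos x)` in its power series and integrate term by term, the series of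
`exp |r cos x|` dominating. By the reduction formula `∫ cos^(k+2) = (k+1)/(k+2) ∫ cos^k` over a
full period, the odd moments of `cos` vanish and `(1/2π) ∫ cos^(2n) = (2n)! / (n!² 4ⁿ)`, whose
`(2n)!` cancels the one of the exponential series.
-/

open scoped Real Nat
open MeasureTheory intervalIntegral Real

theorem Real.hasSum_pow_div_factorial (x : ℝ) : HasSum (fun n => x ^ n / n !) (exp x) :=
  Real.exp_eq_exp_ℝ ▸ NormedSpace.expSeries_div_hasSum_exp x

theorem hasSum_intervalIntegral_pow_div_factorial {f : ℝ → ℝ} (hf : Continuous f) (a b : ℝ) :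
    HasSum (fun n => ∫ x in a..b, f x ^ n / n !) (∫ x in a..b, exp (f x)) := by
  refine hasSum_integral_of_dominated_convergence (fun n x => |f x| ^ n / n !)
    (fun n => by fun_prop) (fun n => ?_) (.of_forall fun x _ => summable_pow_div_factorial _)
    ?_ (.of_forall fun x _ => hasSum_pow_div_factorial (f x))
  · exact .of_forall fun x _ => by simp
  · simp_rw [fun x => (hasSum_pow_div_factorial |f x|).tsum_eq]
    exact (by fun_prop : Continuous fun x => exp |f x|).intervalIntegrable a b

theorem integral_cos_pow_odd (n : ℕ) : ∫ x in (0 : ℝ)..2 * π, cos x ^ (2 * n + 1) = 0 := by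
  induction n with
  | zero => simp
  | succ k ih =>
    rw [show 2 * (k + 1) + 1 = 2 * k + 1 + 2 by ring, integral_cos_pow]
    simp [ih]

theorem integral_cos_pow_even (n : ℕ) :
    ∫ x in (0 : ℝ)..2 * π, cos x ^ (2 * n) = 2 * π * (2 * n)! / ((n ! : ℝ) ^ 2 * 2 ^ (2 * n)) := by
  induction n with
  | zero => simp
  | succ k ih =>
    rw [show 2 * (k + 1) = 2 * k + 2 by ring, integral_cos_pow, ih,
      show 2 * k + 2 = (2 * k + 1) + 1 by ring, Nat.factorial_succ, Nat.factorial_succ,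
      Nat.factorial_succ]
    simp only [sin_two_pi, sin_zero]
    push_cast
    field_simp
    ring

/-- Power series expansion of the Bessel-type integral:
`(1/2π) ∫₀^{2π} e^{r cos x} dx = Σ_{n≥0} r^{2n} / ((n!)² 2^{2n})` for all real `r`. -/
theorem stmt_16 (r : ℝ) :
    (1 / (2 * π)) * ∫ x in (0 : ℝ)..(2 * π), Real.exp (r * Real.cos x) =
      ∑' n : ℕ, r ^ (2 * n) / ((n.factorial : ℝ) ^ 2 * 2 ^ (2 * n)) := by
  set c : ℕ → ℝ := fun k => r ^ k / k ! * ∫ x in (0 : ℝ)..2 * π, cos x ^ k with hc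
  have hall : HasSum c (∫ x in (0 : ℝ)..2 * π, exp (r * cos x)) := by
    convert hasSum_intervalIntegral_pow_div_factorial (f := fun x => r * cos x) (by fun_prop)
      0 (2 * π) using 2 with k
    simp only [hc, ← intervalIntegral.integral_const_mul]
    congr 1 with x
    ring
  have hodd : ∀ k ∉ Set.range (2 * ·), c k = 0 := by
    intro k hk
    obtain ⟨m, rfl⟩ : Odd k := Nat.not_even_iff_odd.mp fun ⟨m, hm⟩ => hk ⟨m, by lia⟩
    simp [hc, integral_cos_pow_odd]
  have heven := ((mul_right_injective₀ two_ne_zero).hasSum_iff hodd).mpr hall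
  have hcoeff (n : ℕ) : r ^ (2 * n) / ((n ! : ℝ) ^ 2 * 2 ^ (2 * n)) = c (2 * n) / (2 * π) := by
    simp only [hc, integral_cos_pow_even]
    field_simp
  rw [one_div_mul_eq_div, tsum_congr hcoeff]
  exact (heven.div_const _).tsum_eq.symm
end

section
/- The function P(s,t) = log[(1/2π) ∫_0^{2π} e^{√(s²+t²) cos x} dx] is well-defined, convex on ℝ², and satisfies P(0,0) = 0. -/
/-!
Let `ν` be the uniform probability measure on one period of `cos`. The quantity inside the
logarithm is the moment generating function of `cos` under `ν` at `r = √(s² + t²)`, so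
`P = Λ ∘ ‖·‖` where `Λ` is the cumulant generating function of `cos`. `Λ` is convex (its second
derivative is a variance) and even (shifting `x` by `π` turns `cos` into `-cos`), hence
nondecreasing on `[0, ∞)`; a convex nondecreasing function of the convex Euclidean norm is convex.
Finally `Λ 0 = log (ν univ) = 0`.
-/

open scoped Real
open MeasureTheory ProbabilityTheory Set Real

theorem ConvexOn.monotoneOn_Ici_of_even {f : ℝ → ℝ} (hf : ConvexOn ℝ univ f)
    (heven : ∀ x, f (-x) = f x) : MonotoneOn f (Ici 0) := by
  intro a ha b _ hab
  calc f a ≤ max (f (-b)) (f b) :=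
        hf.le_max_of_mem_Icc (mem_univ _) (mem_univ _) ⟨by linarith [mem_Ici.1 ha], hab⟩
    _ = f b := by rw [heven, max_self]

theorem ConvexOn.comp_of_monotoneOn_Ici {E : Type*} [AddCommMonoid E] [Module ℝ E] {s : Set E}
    {g : ℝ → ℝ} {f : E → ℝ} (hg : ConvexOn ℝ (Ici 0) g) (hg' : MonotoneOn g (Ici 0))
    (hf : ConvexOn ℝ s f) (hf₀ : ∀ x ∈ s, 0 ≤ f x) : ConvexOn ℝ s (g ∘ f) :=
  ⟨hf.1, fun x hx y hy _ _ ha hb hab ↦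
    (hg' (hf₀ _ (hf.1 hx hy ha hb hab)) (hg.1 (hf₀ x hx) (hf₀ y hy) ha hb hab)
      (hf.2 hx hy ha hb hab)).trans (hg.2 (hf₀ x hx) (hf₀ y hy) ha hb hab)⟩

theorem convexOn_sqrt_sq_add_sq : ConvexOn ℝ univ fun p : ℝ × ℝ ↦ √(p.1 ^ 2 + p.2 ^ 2) := by
  refine ((convexOn_norm convex_univ).comp_linearMap
    Complex.equivRealProdLm.symm.toLinearMap).congr fun p _ ↦ ?_
  simp [Complex.equivRealProdLm_symm_apply, Complex.norm_add_mul_I]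

theorem ProbabilityTheory.convexOn_cgf {Ω : Type*} [MeasurableSpace Ω] {X : Ω → ℝ}
    {μ : Measure Ω} (h : ∀ t, Integrable (fun ω ↦ exp (t * X ω)) μ) :
    ConvexOn ℝ univ (cgf X μ) := by
  have hint : ∀ t, t ∈ interior (integrableExpSet X μ) := fun t ↦ by
    rw [show integrableExpSet X μ = univ from eq_univ_of_forall h, interior_univ]
    trivial
  have han : ∀ t, AnalyticAt ℝ (cgf X μ) t := fun t ↦ analyticAt_cgf (hint t)
  refine convexOn_univ_of_deriv2_nonneg (fun t ↦ (han t).differentiableAt)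
    (fun t ↦ (han t).deriv.differentiableAt) fun t ↦ ?_
  rw [← iteratedDeriv_eq_iterate, iteratedDeriv_two_cgf_eq_integral (hint t)]
  exact div_nonneg (integral_nonneg fun ω ↦ by positivity) mgf_nonneg

noncomputable def uniformAngle : Measure ℝ := volume[|Ioc 0 (2 * π)]

instance : IsProbabilityMeasure uniformAngle :=
  cond_isProbabilityMeasure_of_finite (by simp [pi_pos]) (by simp [ENNReal.mul_eq_top])

theorem mgf_cos_uniformAngle (r : ℝ) :
    mgf cos uniformAngle r = 1 / (2 * π) * ∫ x in 0..2 * π, exp (r * cos x) := by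
  rw [uniformAngle, ProbabilityTheory.cond, mgf_smul_measure, mgf,
    intervalIntegral.integral_of_le (by positivity)]
  simp [Real.volume_Ioc, pi_pos.le]

theorem integrable_exp_mul_cos_uniformAngle (t : ℝ) :
    Integrable (fun x ↦ exp (t * cos x)) uniformAngle := by
  refine Integrable.of_bound (by fun_prop) (exp |t|) (Filter.Eventually.of_forall fun x ↦ ?_)
  rw [norm_of_nonneg (exp_pos _).le, exp_le_exp]
  calc t * cos x ≤ |t * cos x| := le_abs_self _
    _ ≤ |t| := by rw [abs_mul]; exact mul_le_of_le_one_right (abs_nonneg t) (abs_cos_le_one x)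

theorem intervalIntegral_exp_neg_mul_cos (r : ℝ) :
    ∫ x in 0..2 * π, exp (-r * cos x) = ∫ x in 0..2 * π, exp (r * cos x) := by
  have hper : Function.Periodic (fun x ↦ exp (r * cos x)) (2 * π) := fun x ↦ by
    simp [cos_add_two_pi]
  calc ∫ x in 0..2 * π, exp (-r * cos x) = ∫ x in 0..2 * π, exp (r * cos (x + π)) := by
        simp [cos_add_pi]
    _ = ∫ x in π..π + 2 * π, exp (r * cos x) := by
        rw [intervalIntegral.integral_comp_add_right (fun x ↦ exp (r * cos x))]; ring_nf
    _ = ∫ x in 0..2 * π, exp (r * cos x) := by simpa using hper.intervalIntegral_add_eq π 0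

theorem cgf_cos_uniformAngle_neg (r : ℝ) : cgf cos uniformAngle (-r) = cgf cos uniformAngle r := by
  rw [cgf, cgf, mgf_cos_uniformAngle, mgf_cos_uniformAngle, intervalIntegral_exp_neg_mul_cos]

/-- The pressure function `P(s,t) = log[(1/2π) ∫₀^{2π} e^{√(s²+t²) cos x} dx]` is
well-defined (the integral is positive), convex on `ℝ²`, and `P(0,0) = 0`. -/
theorem stmt_17 :
    (∀ s t : ℝ,
      0 < (1 / (2 * π)) * ∫ x in (0 : ℝ)..(2 * π), Real.exp (Real.sqrt (s ^ 2 + t ^ 2) * Real.cos x)) ∧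
    ConvexOn ℝ Set.univ (fun p : ℝ × ℝ =>
      Real.log ((1 / (2 * π)) *
        ∫ x in (0 : ℝ)..(2 * π), Real.exp (Real.sqrt (p.1 ^ 2 + p.2 ^ 2) * Real.cos x))) ∧
    Real.log ((1 / (2 * π)) *
        ∫ x in (0 : ℝ)..(2 * π), Real.exp (Real.sqrt ((0:ℝ) ^ 2 + (0:ℝ) ^ 2) * Real.cos x)) = 0 := by
  simp only [← mgf_cos_uniformAngle]
  refine ⟨fun s t ↦ mgf_pos (integrable_exp_mul_cos_uniformAngle _), ?_, by simp⟩
  have hconv : ConvexOn ℝ univ (cgf cos uniformAngle) :=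
    convexOn_cgf integrable_exp_mul_cos_uniformAngle
  exact (hconv.subset (subset_univ _) (convex_Ici 0)).comp_of_monotoneOn_Ici
    (hconv.monotoneOn_Ici_of_even cgf_cos_uniformAngle_neg) convexOn_sqrt_sq_add_sq
    fun p _ ↦ sqrt_nonneg _
end
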